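/- Let X be a multiple conjugation biquandle and Y an X-set. Applying the block boundary twice to the same block of a generator of a prismatic chain group gives zero: for any generator ⟨y⟩⟨𝐱₁⟩⋯⟨𝐱_k⟩ and any i ≤ k, ⟨y⟩⟨𝐱₁⟩⋯(∂∘∂)⟨𝐱_i⟩⋯⟨𝐱_k⟩ = 0; more precisely, blockwise one has ∂̃∘∂̃ + ∂̃∘∂̂ + ∂̂∘∂̃ = 0 and ∂̂∘∂̂ = 0. -/

import Mathlib

structure IsMCB {Λ : Type u} (G : Λ → Type v) [∀ l, Group (G l)]
    (und ovr : (Σ l, G l) → (Σ l, G l) → (Σ l, G l)) : Prop where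
  ex_uu : ∀ x y z, und (und x y) (und z y) = und (und x z) (ovr y z)
  ex_ou : ∀ x y z, ovr (und x y) (und z y) = und (ovr x z) (ovr y z)
  ex_oo : ∀ x y z, ovr (ovr x y) (ovr z y) = ovr (ovr x z) (und y z)
  hom_und : ∀ (l : Λ) (x : Σ l, G l),
    ∃ (m : Λ) (f : G l →* G m), ∀ a : G l, und ⟨l, a⟩ x = ⟨m, f a⟩
  hom_ovr : ∀ (l : Λ) (x : Σ l, G l),
    ∃ (m : Λ) (f : G l →* G m), ∀ a : G l, ovr ⟨l, a⟩ x = ⟨m, f a⟩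
  und_mul : ∀ (l : Λ) (a b : G l) (x : Σ l, G l),
    und x ⟨l, a * b⟩ = und (und x ⟨l, a⟩) (ovr ⟨l, b⟩ ⟨l, a⟩)
  und_one : ∀ (l : Λ) (x : Σ l, G l), und x ⟨l, 1⟩ = x
  ovr_mul : ∀ (l : Λ) (a b : G l) (x : Σ l, G l),
    ovr x ⟨l, a * b⟩ = ovr (ovr x ⟨l, a⟩) (ovr ⟨l, b⟩ ⟨l, a⟩)
  ovr_one : ∀ (l : Λ) (x : Σ l, G l), ovr x ⟨l, 1⟩ = x
  conj : ∀ (l : Λ) (a b : G l), ovr ⟨l, a⁻¹ * b⟩ ⟨l, a⟩ = und ⟨l, b * a⁻¹⟩ ⟨l, a⟩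

structure IsMCBAction {Λ : Type u} (G : Λ → Type v) [∀ l, Group (G l)]
    (und ovr : (Σ l, G l) → (Σ l, G l) → (Σ l, G l))
    {Y : Type w} (act : Y → (Σ l, G l) → Y) : Prop where
  act_one : ∀ (y : Y) (l : Λ), act y ⟨l, 1⟩ = y
  act_mul : ∀ (y : Y) (l : Λ) (a b : G l),
    act y ⟨l, a * b⟩ = act (act y ⟨l, a⟩) (ovr ⟨l, b⟩ ⟨l, a⟩)
  act_ex : ∀ (y : Y) (a b : Σ l, G l),
    act (act y a) (ovr b a) = act (act y b) (und a b)

structure MCB (Λ : Type u) (G : Λ → Type v) [∀ l, Group (G l)] where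
  und : (Σ l, G l) → (Σ l, G l) → (Σ l, G l)
  ovr : (Σ l, G l) → (Σ l, G l) → (Σ l, G l)
  prop : IsMCB G und ovr

/-- A block `⟨x₁,…,x_m⟩`: a (possibly empty) tuple of elements of a single
group `G l`. -/
def PBlock (Λ : Type u) (G : Λ → Type v) : Type (max u v) :=
  Σ l : Λ, List (G l)

variable {Λ : Type u} {G : Λ → Type v} [∀ l, Group (G l)]

/-- Entrywise application of `⊲ a` to a block. -/
noncomputable def pBlockUnd (M : MCB Λ G) (a : Σ l, G l) (b : PBlock Λ G) : PBlock Λ G :=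
  ⟨(M.prop.hom_und b.1 a).choose, b.2.map (M.prop.hom_und b.1 a).choose_spec.choose⟩

/-- Entrywise application of `⊳ a` to a block. -/
noncomputable def pBlockOvr (M : MCB Λ G) (a : Σ l, G l) (b : PBlock Λ G) : PBlock Λ G :=
  ⟨(M.prop.hom_ovr b.1 a).choose, b.2.map (M.prop.hom_ovr b.1 a).choose_spec.choose⟩

/-- The operator `∂̃^{(i)}` applied at the `i`-th block (0-based) of a
generator: `⟨y⟩⟨𝐱₁⟩⋯∂̃⟨𝐱_i⟩⋯⟨𝐱_k⟩`. -/
noncomputable def dTildeAt (M : MCB Λ G) {Y : Type w} (act : Y → (Σ l, G l) → Y)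
    (i : ℕ) (g : Y × List (PBlock Λ G)) : FreeAbelianGroup (Y × List (PBlock Λ G)) :=
  if h : i < g.2.length then
    match g.2.get ⟨i, h⟩ with
    | ⟨_, []⟩ => 0
    | ⟨l, x :: rest⟩ =>
        FreeAbelianGroup.of
          (act g.1 ⟨l, x⟩,
           (g.2.take i).map (pBlockUnd M ⟨l, x⟩)
             ++ ⟨(M.prop.hom_ovr l ⟨l, x⟩).choose,
                  rest.map (fun z => (M.prop.hom_ovr l ⟨l, x⟩).choose_spec.choose (x⁻¹ * z))⟩
             :: (g.2.drop (i + 1)).map (pBlockOvr M ⟨l, x⟩))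
  else 0

/-- The operator `∂̂^{(i)}` applied at the `i`-th block (0-based) of a
generator: `⟨y⟩⟨𝐱₁⟩⋯∂̂⟨𝐱_i⟩⋯⟨𝐱_k⟩`. -/
noncomputable def dHatAt {Y : Type w} (i : ℕ) (g : Y × List (PBlock Λ G)) :
    FreeAbelianGroup (Y × List (PBlock Λ G)) :=
  if h : i < g.2.length then
    ∑ j : Fin (g.2.get ⟨i, h⟩).2.length,
      ((-1 : ℤ) ^ ((j : ℕ) + 1)) •
        FreeAbelianGroup.of
          (g.1, g.2.set i ⟨(g.2.get ⟨i, h⟩).1, (g.2.get ⟨i, h⟩).2.eraseIdx (j : ℕ)⟩)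
  else 0

/-- The operator `∂^{(i)} = ∂̃^{(i)} + ∂̂^{(i)}`. -/
noncomputable def dAt (M : MCB Λ G) {Y : Type w} (act : Y → (Σ l, G l) → Y)
    (i : ℕ) (g : Y × List (PBlock Λ G)) : FreeAbelianGroup (Y × List (PBlock Λ G)) :=
  dTildeAt M act i g + dHatAt i g

/-
`∂̂` is an alternating sum of face maps, so `∂̂ ∘ ∂̂ = 0` by the usual cancellation of the
`(j, k)`-th and `(k, j - 1)`-th double faces for `k < j`.

For `∂̃`, take a block `⟨x, z, …⟩`. The new block produced by `∂̃` starts with `(x⁻¹z) ⊳ x`, and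
by the axioms `w ⊲ (ab) = (w ⊲ a) ⊲ (b ⊳ a)`, `w ⊳ (ab) = (w ⊳ a) ⊳ (b ⊳ a)` and
`y * (ab) = (y * a) * (b ⊳ a)` with `a = x`, `b = x⁻¹z`, applying `∂̃` once more acts as `z`
does: `∂̃∂̃ = ∂̃ ∘ (delete the first entry)`, which cancels the first face in `∂̃∂̂`. Deleting
entry `j + 1` before `∂̃` is deleting entry `j` after it, so the remaining faces of `∂̃∂̂` cancel
those of `∂̂∂̃` in pairs. Finally `∂∂ = (∂̃∂̃ + ∂̃∂̂ + ∂̂∂̃) + ∂̂∂̂`.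
-/

open FreeAbelianGroup Finset

theorem List.length_lt_length_append_cons {α : Type*} (B A : List α) (a : α) :
    B.length < (B ++ a :: A).length := by
  simp

theorem List.getElem_length_append_cons {α : Type*} (B A : List α) (a : α) :
    (B ++ a :: A)[B.length]'(length_lt_length_append_cons B A a) = a := by
  simp

theorem List.set_length_append_cons {α : Type*} (B A : List α) (a b : α) :
    (B ++ a :: A).set B.length b = B ++ b :: A := by
  simp

theorem List.exists_eq_append_cons_of_lt {α : Type*} {L : List α} {i : ℕ} (h : i < L.length) :
    ∃ B a A, L = B ++ a :: A ∧ B.length = i :=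
  ⟨L.take i, L[i], L.drop (i + 1), by rw [← List.drop_eq_getElem_cons h, List.take_append_drop],
    List.length_take_of_le h.le⟩

theorem List.eraseIdx_eraseIdx_of_le {α : Type*} :
    ∀ (l : List α) {k j : ℕ}, k ≤ j →
      (l.eraseIdx (j + 1)).eraseIdx k = (l.eraseIdx k).eraseIdx j
  | [], _, _, _ => by simp
  | _ :: _, 0, _, _ => by simp
  | a :: t, k + 1, j + 1, h => by
    simp [List.eraseIdx_eraseIdx_of_le t (Nat.le_of_succ_le_succ h)]

theorem neg_one_pow_succ_smul_add_neg_one_pow_smul {β : Type*} [AddCommGroup β]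
    (n : ℕ) (b : β) : (-1 : ℤ) ^ (n + 1) • b + (-1 : ℤ) ^ n • b = 0 := by
  rw [pow_succ, mul_neg_one, neg_smul, neg_add_cancel]

theorem List.sum_alternating_eraseIdx_eraseIdx {α β : Type*} [AddCommGroup β]
    (g : List α → β) (l : List α) :
    ∑ j ∈ Finset.range l.length, (-1 : ℤ) ^ (j + 1) •
      ∑ k ∈ Finset.range (l.eraseIdx j).length, (-1 : ℤ) ^ (k + 1) •
        g ((l.eraseIdx j).eraseIdx k) = 0 := by
  have hsign : ∀ j k : ℕ, (-1 : ℤ) ^ (j + 1) * (-1) ^ (k + 1) = (-1) ^ (j + k) := fun j k => by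
    ring
  have hterm : ∀ j ∈ Finset.range l.length, (-1 : ℤ) ^ (j + 1) •
      ∑ k ∈ Finset.range (l.eraseIdx j).length, (-1 : ℤ) ^ (k + 1) •
        g ((l.eraseIdx j).eraseIdx k)
      = ∑ k ∈ Finset.range (l.length - 1), (-1 : ℤ) ^ (j + k) •
        g ((l.eraseIdx j).eraseIdx k) := by
    intro j hj
    rw [List.length_eraseIdx_of_lt (Finset.mem_range.mp hj), Finset.smul_sum]
    simp only [smul_smul, hsign]
  rw [Finset.sum_congr rfl hterm, ← Finset.sum_product']
  refine Finset.sum_involution (fun p _ => if p.2 < p.1 then (p.2, p.1 - 1) else (p.2 + 1, p.1))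
    ?_ ?_ ?_ ?_
  · rintro ⟨j, k⟩ -
    dsimp only
    split_ifs with h
    · obtain ⟨d, rfl⟩ := Nat.exists_eq_add_of_lt h
      rw [show k + d + 1 - 1 = k + d by omega,
        ← l.eraseIdx_eraseIdx_of_le (Nat.le_add_right k d),
        show k + d + 1 + k = k + (k + d) + 1 by ring, neg_one_pow_succ_smul_add_neg_one_pow_smul]
    · rw [l.eraseIdx_eraseIdx_of_le (not_lt.mp h), add_comm, add_comm (k + 1), ← add_assoc,
        neg_one_pow_succ_smul_add_neg_one_pow_smul]
  · rintro ⟨j, k⟩ - -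
    dsimp only
    split_ifs <;> simp only [ne_eq, Prod.mk.injEq] <;> omega
  · rintro ⟨j, k⟩ hp
    simp only [Finset.mem_product, Finset.mem_range] at hp ⊢
    split_ifs <;> omega
  · rintro ⟨j, k⟩ -
    by_cases h : k < j
    · simp only [h, ↓reduceIte, show ¬ j - 1 < k by omega, Prod.mk.injEq, and_true]
      omega
    · simp [h, show j < k + 1 by omega]

theorem Sigma.ext_map_mk {ι : Type*} {β : ι → Type*} {b c : Σ i, List (β i)}
    (hfst : b.1 = c.1) (hsnd : b.2.map (Sigma.mk b.1) = c.2.map (Sigma.mk c.1)) : b = c := by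
  obtain ⟨l, s⟩ := b
  obtain ⟨_, t⟩ := c
  subst hfst
  exact congrArg (Sigma.mk l) (List.map_injective_iff.mpr sigma_mk_injective hsnd)

namespace PBlock

section MapHom

variable {op : (Σ l, G l) → (Σ l, G l) → Σ l, G l}
  (hop : ∀ (l : Λ) (x : Σ l, G l),
    ∃ (m : Λ) (f : G l →* G m), ∀ a : G l, op ⟨l, a⟩ x = ⟨m, f a⟩)

noncomputable def mapHom (x : Σ l, G l) (b : PBlock Λ G) : PBlock Λ G :=
  ⟨(hop b.1 x).choose, b.2.map (hop b.1 x).choose_spec.choose⟩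

theorem op_mk_eq (l : Λ) (x : Σ l, G l) (a : G l) :
    op ⟨l, a⟩ x = ⟨(hop l x).choose, (hop l x).choose_spec.choose a⟩ :=
  (hop l x).choose_spec.choose_spec a

theorem mapHom_fst (x : Σ l, G l) (b : PBlock Λ G) :
    (mapHom hop x b).1 = (op ⟨b.1, 1⟩ x).1 := by
  rw [op_mk_eq hop]
  rfl

theorem map_mk_mapHom (x : Σ l, G l) (b : PBlock Λ G) :
    (mapHom hop x b).2.map (Sigma.mk (mapHom hop x b).1)
      = (b.2.map (Sigma.mk b.1)).map (op · x) := by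
  simp only [mapHom, List.map_map]
  exact List.map_congr_left fun a _ => (op_mk_eq hop b.1 x a).symm

theorem mapHom_mapHom {x y z : Σ l, G l} (h : ∀ s, op (op s x) y = op s z) (b : PBlock Λ G) :
    mapHom hop y (mapHom hop x b) = mapHom hop z b := by
  refine Sigma.ext_map_mk ?_ ?_
  · have hone : op ⟨b.1, 1⟩ x = ⟨(mapHom hop x b).1, 1⟩ := by
      rw [op_mk_eq hop, map_one]
      rfl
    rw [mapHom_fst hop y, ← hone, h, mapHom_fst]
  · rw [map_mk_mapHom, map_mk_mapHom, map_mk_mapHom, List.map_map]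
    exact List.map_congr_left fun s _ => h s

end MapHom

end PBlock

theorem pBlockUnd_pBlockUnd (M : MCB Λ G) {x y z : Σ l, G l}
    (h : ∀ s, M.und (M.und s x) y = M.und s z) (b : PBlock Λ G) :
    pBlockUnd M y (pBlockUnd M x b) = pBlockUnd M z b :=
  PBlock.mapHom_mapHom M.prop.hom_und h b

theorem pBlockOvr_pBlockOvr (M : MCB Λ G) {x y z : Σ l, G l}
    (h : ∀ s, M.ovr (M.ovr s x) y = M.ovr s z) (b : PBlock Λ G) :
    pBlockOvr M y (pBlockOvr M x b) = pBlockOvr M z b :=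
  PBlock.mapHom_mapHom M.prop.hom_ovr h b

/-! Several statements below ascribe `List (PBlock Λ G)` to lists containing an anonymous
constructor `⟨l, s⟩`: without it the constructor elaborates at type `Σ l, List (G l)`, which is
`PBlock Λ G` only up to unfolding, and `rw`/`simp` then fail to match. -/

section Generators

variable (M : MCB Λ G) {Y : Type w} (act : Y → (Σ l, G l) → Y) (y : Y) {i : ℕ}
  {B A : List (PBlock Λ G)}

theorem dTildeAt_append (hi : B.length = i) (bl : PBlock Λ G) :
    dTildeAt M act i (y, B ++ bl :: A) =
      match bl with
      | ⟨_, []⟩ => 0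
      | ⟨l, x :: rest⟩ =>
        of (act y ⟨l, x⟩, B.map (pBlockUnd M ⟨l, x⟩)
          ++ pBlockOvr M ⟨l, x⟩ ⟨l, rest.map (x⁻¹ * ·)⟩ :: A.map (pBlockOvr M ⟨l, x⟩)) := by
  subst hi
  rw [dTildeAt, dif_pos (List.length_lt_length_append_cons B A bl)]
  simp only [List.get_eq_getElem, List.getElem_length_append_cons, List.take_append_length,
    List.drop_length_add_append, List.drop_one, List.tail_cons]
  rcases bl with ⟨l, _ | ⟨x, rest⟩⟩
  · rfl
  · simp [pBlockOvr, List.map_map, Function.comp_def]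

theorem dTildeAt_append_nil (hi : B.length = i) (l : Λ) :
    dTildeAt M act i (y, (B ++ ⟨l, []⟩ :: A : List (PBlock Λ G))) = 0 :=
  dTildeAt_append M act y hi _

theorem dTildeAt_append_cons (hi : B.length = i) (l : Λ) (x : G l) (rest : List (G l)) :
    dTildeAt M act i (y, (B ++ ⟨l, x :: rest⟩ :: A : List (PBlock Λ G)))
      = of (act y ⟨l, x⟩, B.map (pBlockUnd M ⟨l, x⟩)
          ++ pBlockOvr M ⟨l, x⟩ ⟨l, rest.map (x⁻¹ * ·)⟩ :: A.map (pBlockOvr M ⟨l, x⟩)) :=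
  dTildeAt_append M act y hi _

theorem dTildeAt_of_length_le {g : Y × List (PBlock Λ G)} (h : g.2.length ≤ i) :
    dTildeAt M act i g = 0 :=
  dif_neg (not_lt.mpr h)

end Generators

section Faces

-- Fresh `Λ` and `G`, so that the ambient `Group` instance, which `∂̂` never uses, is not included.
variable {Λ : Type*} {G : Λ → Type*} {Y : Type*} (y : Y) {i : ℕ} {B A : List (PBlock Λ G)}

theorem dHatAt_append (hi : B.length = i) (bl : PBlock Λ G) :
    dHatAt i (y, B ++ bl :: A)
      = ∑ j ∈ range bl.2.length, (-1 : ℤ) ^ (j + 1) •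
          of (y, B ++ ⟨bl.1, bl.2.eraseIdx j⟩ :: A) := by
  subst hi
  rw [dHatAt, dif_pos (List.length_lt_length_append_cons B A _)]
  -- the index type `Fin (L[i]).2.length` of the sum depends on the block, so generalize it
  suffices key : ∀ c : PBlock Λ G, c = bl →
      ∑ j : Fin c.2.length, (-1 : ℤ) ^ ((j : ℕ) + 1) •
        of (y, (B ++ bl :: A).set B.length ⟨c.1, c.2.eraseIdx j⟩)
      = ∑ j ∈ range bl.2.length, (-1 : ℤ) ^ (j + 1) •
          of (y, B ++ ⟨bl.1, bl.2.eraseIdx j⟩ :: A) from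
    key _ (List.getElem_length_append_cons B A bl)
  rintro _ rfl
  rw [← Fin.sum_univ_eq_sum_range]
  exact sum_congr rfl fun j _ =>
    congrArg (fun L => (-1 : ℤ) ^ ((j : ℕ) + 1) • of (y, L))
      (List.set_length_append_cons B A _ _)

theorem dHatAt_append_mk (hi : B.length = i) (l : Λ) (s : List (G l)) :
    dHatAt i (y, (B ++ ⟨l, s⟩ :: A : List (PBlock Λ G)))
      = ∑ j ∈ range s.length, (-1 : ℤ) ^ (j + 1) •
          of (y, (B ++ ⟨l, s.eraseIdx j⟩ :: A : List (PBlock Λ G))) :=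
  dHatAt_append y hi _

theorem dHatAt_of_length_le {g : Y × List (PBlock Λ G)} (h : g.2.length ≤ i) :
    dHatAt i g = 0 :=
  dif_neg (not_lt.mpr h)

theorem lift_dHatAt_dHatAt_append (hi : B.length = i) (bl : PBlock Λ G) :
    lift (dHatAt i) (dHatAt i (y, B ++ bl :: A)) = 0 := by
  obtain ⟨l, s⟩ := bl
  rw [dHatAt_append_mk y hi, map_sum]
  simp only [map_zsmul, lift_apply_of, dHatAt_append_mk y hi]
  exact List.sum_alternating_eraseIdx_eraseIdx
    (fun s => of (y, (B ++ ⟨l, s⟩ :: A : List (PBlock Λ G)))) s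

theorem lift_dHatAt_lift_dHatAt (i : ℕ) (c : FreeAbelianGroup (Y × List (PBlock Λ G))) :
    lift (dHatAt i) (lift (dHatAt i) c) = 0 := by
  suffices h : (lift (dHatAt i)).comp (lift (dHatAt i)) = 0 from DFunLike.congr_fun h c
  ext ⟨y, L⟩
  simp only [AddMonoidHom.comp_apply, lift_apply_of, AddMonoidHom.zero_apply]
  rcases lt_or_ge i L.length with h | h
  · obtain ⟨B, bl, A, rfl, hi⟩ := List.exists_eq_append_cons_of_lt h
    exact lift_dHatAt_dHatAt_append y hi bl
  · rw [dHatAt_of_length_le h, map_zero]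

end Faces

section Boundary

variable (M : MCB Λ G) {Y : Type w} (act : Y → (Σ l, G l) → Y)

theorem lift_dTildeAt_dTildeAt_append_cons (hact : IsMCBAction G M.und M.ovr act) (y : Y)
    {i : ℕ} {B A : List (PBlock Λ G)} (hi : B.length = i) (l : Λ) (x : G l) (rest : List (G l)) :
    lift (dTildeAt M act i)
        (dTildeAt M act i (y, (B ++ ⟨l, x :: rest⟩ :: A : List (PBlock Λ G))))
      = dTildeAt M act i (y, (B ++ ⟨l, rest⟩ :: A : List (PBlock Λ G))) := by
  have hi' : (B.map (pBlockUnd M ⟨l, x⟩)).length = i := by rw [List.length_map, hi]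
  rw [dTildeAt_append_cons M act y hi, lift_apply_of]
  rcases rest with _ | ⟨z, rest⟩
  · exact (dTildeAt_append_nil M act _ hi' _).trans (dTildeAt_append_nil M act y hi l).symm
  set X : Σ l, G l := ⟨l, x⟩
  set m := (M.prop.hom_ovr l X).choose
  set f := (M.prop.hom_ovr l X).choose_spec.choose
  have hW : (⟨m, f (x⁻¹ * z)⟩ : Σ l, G l) = M.ovr ⟨l, x⁻¹ * z⟩ X :=
    (PBlock.op_mk_eq M.prop.hom_ovr l X _).symm
  have hmid : ((rest.map (x⁻¹ * ·)).map f).map ((f (x⁻¹ * z))⁻¹ * ·)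
      = (rest.map (z⁻¹ * ·)).map f := by
    simp only [List.map_map]
    refine List.map_congr_left fun u _ => ?_
    simp only [Function.comp_apply, ← map_inv, ← map_mul]
    congr 1
    group
  have hund : ∀ s, M.und (M.und s X) (M.ovr ⟨l, x⁻¹ * z⟩ X) = M.und s ⟨l, z⟩ := fun s => by
    rw [← M.prop.und_mul, mul_inv_cancel_left]
  have hovr : ∀ s, M.ovr (M.ovr s X) (M.ovr ⟨l, x⁻¹ * z⟩ X) = M.ovr s ⟨l, z⟩ := fun s => by
    rw [← M.prop.ovr_mul, mul_inv_cancel_left]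
  have hy : act (act y X) (M.ovr ⟨l, x⁻¹ * z⟩ X) = act y ⟨l, z⟩ := by
    rw [← hact.act_mul, mul_inv_cancel_left]
  rw [show pBlockOvr M X ⟨l, (z :: rest).map (x⁻¹ * ·)⟩
      = ⟨m, f (x⁻¹ * z) :: (rest.map (x⁻¹ * ·)).map f⟩ from rfl,
    dTildeAt_append_cons M act _ hi', dTildeAt_append_cons M act y hi, hmid, hW, hy]
  refine congrArg (fun L => of (act y ⟨l, z⟩, L)) (congrArg₂ _ ?_
    (congrArg₂ _ (pBlockOvr_pBlockOvr M hovr ⟨l, rest.map (z⁻¹ * ·)⟩) ?_))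
  · rw [List.map_map]
    exact List.map_congr_left fun b _ => pBlockUnd_pBlockUnd M hund b
  · rw [List.map_map]
    exact List.map_congr_left fun b _ => pBlockOvr_pBlockOvr M hovr b

theorem lift_dTildeAt_dTildeAt_add_append (hact : IsMCBAction G M.und M.ovr act) (y : Y)
    {i : ℕ} {B A : List (PBlock Λ G)} (hi : B.length = i) (bl : PBlock Λ G) :
    lift (dTildeAt M act i) (dTildeAt M act i (y, B ++ bl :: A))
      + lift (dTildeAt M act i) (dHatAt i (y, B ++ bl :: A))
      + lift (dHatAt i) (dTildeAt M act i (y, B ++ bl :: A)) = 0 := by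
  rcases bl with ⟨l, _ | ⟨x, rest⟩⟩
  · rw [dTildeAt_append_nil M act y hi, dHatAt_append_mk y hi]
    simp
  have hi' : (B.map (pBlockUnd M ⟨l, x⟩)).length = i := by rw [List.length_map, hi]
  have hlen : (pBlockOvr M ⟨l, x⟩ ⟨l, rest.map (x⁻¹ * ·)⟩).2.length = rest.length := by
    simp [pBlockOvr]
  have hface : ∀ j,
      dTildeAt M act i (y, (B ++ ⟨l, x :: rest.eraseIdx j⟩ :: A : List (PBlock Λ G)))
      = of (act y ⟨l, x⟩, B.map (pBlockUnd M ⟨l, x⟩)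
          ++ ⟨(pBlockOvr M ⟨l, x⟩ ⟨l, rest.map (x⁻¹ * ·)⟩).1,
              (pBlockOvr M ⟨l, x⟩ ⟨l, rest.map (x⁻¹ * ·)⟩).2.eraseIdx j⟩
            :: A.map (pBlockOvr M ⟨l, x⟩)) := by
    intro j
    rw [dTildeAt_append_cons M act y hi]
    simp only [pBlockOvr, List.eraseIdx_map]
  rw [lift_dTildeAt_dTildeAt_append_cons M act hact y hi, dHatAt_append_mk y hi,
    dTildeAt_append_cons M act y hi, lift_apply_of, dHatAt_append _ hi', hlen, map_sum,
    List.length_cons, sum_range_succ']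
  simp only [map_zsmul, lift_apply_of, List.eraseIdx_cons_succ, List.eraseIdx_cons_zero, hface]
  rw [add_left_comm, add_right_comm, ← sum_add_distrib,
    sum_eq_zero fun j _ => neg_one_pow_succ_smul_add_neg_one_pow_smul (j + 1) _]
  simp

theorem lift_dTildeAt_lift_dTildeAt_add (hact : IsMCBAction G M.und M.ovr act) (i : ℕ)
    (c : FreeAbelianGroup (Y × List (PBlock Λ G))) :
    lift (dTildeAt M act i) (lift (dTildeAt M act i) c)
      + lift (dTildeAt M act i) (lift (dHatAt i) c)
      + lift (dHatAt i) (lift (dTildeAt M act i) c) = 0 := by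
  suffices h : (lift (dTildeAt M act i)).comp (lift (dTildeAt M act i))
      + (lift (dTildeAt M act i)).comp (lift (dHatAt i))
      + (lift (dHatAt i)).comp (lift (dTildeAt M act i)) = 0 from DFunLike.congr_fun h c
  ext ⟨y, L⟩
  simp only [AddMonoidHom.add_apply, AddMonoidHom.comp_apply, lift_apply_of,
    AddMonoidHom.zero_apply]
  rcases lt_or_ge i L.length with h | h
  · obtain ⟨B, bl, A, rfl, hi⟩ := List.exists_eq_append_cons_of_lt h
    exact lift_dTildeAt_dTildeAt_add_append M act hact y hi bl
  · rw [dTildeAt_of_length_le M act h, dHatAt_of_length_le h]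
    simp

theorem lift_dAt_lift_dAt (hact : IsMCBAction G M.und M.ovr act) (i : ℕ)
    (c : FreeAbelianGroup (Y × List (PBlock Λ G))) :
    lift (dAt M act i) (lift (dAt M act i) c) = 0 := by
  have hsplit : lift (dAt M act i) = lift (dTildeAt M act i) + lift (dHatAt i) :=
    lift_add (dTildeAt M act i) (dHatAt i)
  simp only [hsplit, AddMonoidHom.add_apply, map_add]
  linear_combination (norm := module)
    lift_dTildeAt_lift_dTildeAt_add M act hact i c + lift_dHatAt_lift_dHatAt i c

end Boundary

theorem stmt12_general (M : MCB Λ G) {Y : Type w} (act : Y → (Σ l, G l) → Y)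
    (hact : IsMCBAction G M.und M.ovr act) :
    (∀ (i : ℕ) (c : FreeAbelianGroup (Y × List (PBlock Λ G))),
        FreeAbelianGroup.lift (dAt M act i) (FreeAbelianGroup.lift (dAt M act i) c) = 0) ∧
    (∀ (i : ℕ) (c : FreeAbelianGroup (Y × List (PBlock Λ G))),
        FreeAbelianGroup.lift (dTildeAt M act i) (FreeAbelianGroup.lift (dTildeAt M act i) c)
          + FreeAbelianGroup.lift (dTildeAt M act i) (FreeAbelianGroup.lift (dHatAt i) c)
          + FreeAbelianGroup.lift (dHatAt i) (FreeAbelianGroup.lift (dTildeAt M act i) c) = 0) ∧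
    (∀ (i : ℕ) (c : FreeAbelianGroup (Y × List (PBlock Λ G))),
        FreeAbelianGroup.lift (dHatAt i) (FreeAbelianGroup.lift (dHatAt i) c) = 0) :=
  ⟨lift_dAt_lift_dAt M act hact, lift_dTildeAt_lift_dTildeAt_add M act hact,
    lift_dHatAt_lift_dHatAt⟩

/-- STATEMENT 12 -/
theorem stmt12 (M : MCB Λ G) {Y : Type w} [Nonempty Y] (act : Y → (Σ l, G l) → Y)
    (hact : IsMCBAction G M.und M.ovr act) :
    (∀ (i : ℕ) (c : FreeAbelianGroup (Y × List (PBlock Λ G))),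
        FreeAbelianGroup.lift (dAt M act i) (FreeAbelianGroup.lift (dAt M act i) c) = 0) ∧
    (∀ (i : ℕ) (c : FreeAbelianGroup (Y × List (PBlock Λ G))),
        FreeAbelianGroup.lift (dTildeAt M act i) (FreeAbelianGroup.lift (dTildeAt M act i) c)
          + FreeAbelianGroup.lift (dTildeAt M act i) (FreeAbelianGroup.lift (dHatAt i) c)
          + FreeAbelianGroup.lift (dHatAt i) (FreeAbelianGroup.lift (dTildeAt M act i) c) = 0) ∧
    (∀ (i : ℕ) (c : FreeAbelianGroup (Y × List (PBlock Λ G))),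
        FreeAbelianGroup.lift (dHatAt i) (FreeAbelianGroup.lift (dHatAt i) c) = 0) :=
  stmt12_general M act hact
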